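/- arXiv:1907.02817 — 3 statements merged into one kernel-verified Lean document; each statement's English description precedes it below -/
import Mathlib

section
/- Let K be a field and (E,w) a row-finite weighted graph satisfying Condition (LPA). If e and f are distinct edges of E such that s(e), s(f) ∈ T(r(E¹_w)), then r(e) ≠ r(f). -/
open FreeAlgebra
open scoped Classical

/-- A row-finite weighted graph: a directed graph with source `s`, range `r` and
a weight map `w : E¹ → {1,2,3,…}`, such that every vertex emits finitely many edges. -/
structure WGraph : Type 1 where
  V : Type
  E : Type
  s : E → V
  r : E → V
  w : E → ℕ
  w_pos : ∀ e, 0 < w e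
  rowFinite : ∀ v, {e | s e = v}.Finite

namespace WGraph

variable (G : WGraph)

/-- The weight of a vertex: `w(v) = max {w(e) : e ∈ s⁻¹(v)}` (with `max ∅ = 0`). -/
noncomputable def vw (v : G.V) : ℕ := (G.rowFinite v).toFinset.sup G.w

/-- One-step reachability: there is an edge from `u` to `v`. -/
def Adj (u v : G.V) : Prop := ∃ e, G.s e = u ∧ G.r e = v

/-- `u ≥ v`: there is a (possibly empty) path from `u` to `v`. -/
def Geq (u v : G.V) : Prop := Relation.ReflTransGen G.Adj u v

/-- An edge is weighted if its weight is `> 1`. -/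
def Weighted (e : G.E) : Prop := 1 < G.w e

/-- Two edges are in line. -/
def InLine (e f : G.E) : Prop := e = f ∨ G.Geq (G.r e) (G.s f) ∨ G.Geq (G.r f) (G.s e)

/-- `c` is a cycle based at `v`. -/
def IsCycleAt (c : List G.E) (v : G.V) : Prop :=
  ∃ h : c ≠ [], c.Chain' (fun a b => G.r a = G.s b) ∧ G.s (c.head h) = v ∧
    G.r (c.getLast h) = v ∧ (c.map G.s).Nodup

/-- Condition (LPA). -/
def LPA : Prop :=
  (∀ e f, G.Weighted e → G.Weighted f → G.s e = G.s f → e = f) ∧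
  (∀ v, (∃ g, G.Weighted g ∧ G.Geq (G.r g) v) → ∀ e f, G.s e = v → G.s f = v → e = f) ∧
  (∀ e f, G.Weighted e → G.Weighted f → ¬ G.InLine e f →
    ∀ v, ¬ (G.Geq (G.r e) v ∧ G.Geq (G.r f) v)) ∧
  (∀ e, G.Weighted e → ∀ v, G.Geq (G.r e) v → ∀ c, G.IsCycleAt c v → e ∈ c)

end WGraph

/-- The generators `v`, `e_i`, `e_i*` (for `1 ≤ i ≤ w(e)`) of the weighted
Leavitt path algebra. -/
inductive WGen (G : WGraph) : Type
  | vtx (v : G.V)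
  | edge (e : G.E) (i : ℕ) (h1 : 1 ≤ i) (h2 : i ≤ G.w e)
  | ghost (e : G.E) (i : ℕ) (h1 : 1 ≤ i) (h2 : i ≤ G.w e)

variable (G : WGraph) (K : Type) [Field K]

/-- The generator `v` in the free algebra. -/
def fvtx (v : G.V) : FreeAlgebra K (WGen G) := ι K (WGen.vtx v)

/-- The generator `e_i` in the free algebra, read as `0` when `i > w(e)`. -/
noncomputable def fedge (e : G.E) (i : ℕ) : FreeAlgebra K (WGen G) :=
  if h : 1 ≤ i ∧ i ≤ G.w e then ι K (WGen.edge e i h.1 h.2) else 0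

/-- The generator `e_i*` in the free algebra, read as `0` when `i > w(e)`. -/
noncomputable def fghost (e : G.E) (i : ℕ) : FreeAlgebra K (WGen G) :=
  if h : 1 ≤ i ∧ i ≤ G.w e then ι K (WGen.ghost e i h.1 h.2) else 0

/-- The defining relations of the weighted Leavitt path algebra. -/
inductive WRel : FreeAlgebra K (WGen G) → FreeAlgebra K (WGen G) → Prop
  | vtxMul (u v : G.V) :
      WRel (fvtx G K u * fvtx G K v) (if u = v then fvtx G K u else 0)
  | srcEdge (e : G.E) (i : ℕ) :
      WRel (fvtx G K (G.s e) * fedge G K e i) (fedge G K e i)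
  | edgeRng (e : G.E) (i : ℕ) :
      WRel (fedge G K e i * fvtx G K (G.r e)) (fedge G K e i)
  | rngGhost (e : G.E) (i : ℕ) :
      WRel (fvtx G K (G.r e) * fghost G K e i) (fghost G K e i)
  | ghostSrc (e : G.E) (i : ℕ) :
      WRel (fghost G K e i * fvtx G K (G.s e)) (fghost G K e i)
  | ck1 (v : G.V) (e f : G.E) (he : G.s e = v) (hf : G.s f = v) :
      WRel (∑ i ∈ Finset.Icc 1 (G.vw v), fghost G K e i * fedge G K f i)
           (if e = f then fvtx G K (G.r e) else 0)
  | ck2 (v : G.V) (i j : ℕ) (hi1 : 1 ≤ i) (hi2 : i ≤ G.vw v) (hj1 : 1 ≤ j) (hj2 : j ≤ G.vw v) :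
      WRel (∑ e ∈ (G.rowFinite v).toFinset, fedge G K e i * fghost G K e j)
           (if i = j then fvtx G K v else 0)

/-- The weighted Leavitt path algebra `L_K(E,w)`, presented by generators and relations. -/
abbrev WLPA : Type := RingQuot (WRel G K)

/-- The canonical quotient map from the free algebra to `L_K(E,w)`. -/
noncomputable def wmk : FreeAlgebra K (WGen G) →ₐ[K] WLPA G K :=
  RingQuot.mkAlgHom K (WRel G K)

/-- The image of a generator in `L_K(E,w)`. -/
noncomputable def gen (x : WGen G) : WLPA G K := wmk G K (ι K x)

/-- The image in `L_K(E,w)` of a word over the generating set. -/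
noncomputable def wordElem (xs : List (WGen G)) : WLPA G K := (xs.map (gen G K)).prod

/-- Source of a letter (with the usual conventions). -/
def gsrc : WGen G → G.V
  | .vtx v => v
  | .edge e _ _ _ => G.s e
  | .ghost e _ _ _ => G.r e

/-- Range of a letter (with the usual conventions). -/
def grng : WGen G → G.V
  | .vtx v => v
  | .edge e _ _ _ => G.r e
  | .ghost e _ _ _ => G.s e

/-- Whether a letter is a vertex letter. -/
def IsVertexLetter : WGen G → Prop
  | .vtx _ => True
  | _ => False

/-- A d-path: a nonempty word which is either a single vertex letter, or consists of
non-vertex letters with matching ranges and sources. -/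
def IsDPath (xs : List (WGen G)) : Prop :=
  (∃ v, xs = [WGen.vtx v]) ∨
  (xs ≠ [] ∧ (∀ x ∈ xs, ¬ IsVertexLetter G x) ∧ xs.Chain' (fun a b => grng G a = gsrc G b))

/-- `sp` is a choice of special edges: for every non-sink `v`, `sp v ∈ s⁻¹(v)`
and `w(sp v) = w(v)`. -/
def IsSpecialChoice (sp : G.V → G.E) : Prop :=
  ∀ v : G.V, (∃ e, G.s e = v) → G.s (sp v) = v ∧ G.w (sp v) = G.vw v

/-- The forbidden two-letter words: `(e^v)_i ((e^v)_j)*` for a special edge `e^v`, and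
`e_1* f_1` for arbitrary edges `e, f`. -/
def Forbidden (sp : G.V → G.E) : WGen G → WGen G → Prop
  | WGen.edge e _ _ _, WGen.ghost f _ _ _ => e = f ∧ sp (G.s e) = e
  | WGen.ghost _ i _ _, WGen.edge _ j _ _ => i = 1 ∧ j = 1
  | _, _ => False

/-- A nod-path: a d-path none of whose subwords is forbidden. -/
def IsNod (sp : G.V → G.E) (xs : List (WGen G)) : Prop :=
  IsDPath G xs ∧ xs.Chain' (fun a b => ¬ Forbidden G sp a b)

/-- The degree of a letter in `⊕_{i∈ℕ} ℤ`. -/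
noncomputable def gdeg : WGen G → (ℕ →₀ ℤ)
  | .vtx _ => 0
  | .edge _ i _ _ => Finsupp.single i 1
  | .ghost _ i _ _ => - Finsupp.single i 1

/-- The homogeneous component of degree `d` of `L_K(E,w)` with respect to the
canonical grading: the span of the images of all words of degree `d`. -/
noncomputable def homComp (d : ℕ →₀ ℤ) : Submodule K (WLPA G K) :=
  Submodule.span K {x | ∃ xs : List (WGen G), (xs.map (gdeg G)).sum = d ∧ x = wordElem G K xs}

/-- `V^(m)`: the span of all products of at most `m` elements of `V`. -/
def pileSpan (K A : Type) [Field K] [Ring A] [Algebra K A] (V : Set A) (m : ℕ) :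
    Submodule K A :=
  Submodule.span K {x | ∃ l : List A, l ≠ [] ∧ l.length ≤ m ∧ (∀ a ∈ l, a ∈ V) ∧ x = l.prod}

/-!
Take a weighted edge `g` with `s e, s f ∈ T(r g)`; (LPA3) provides a common one as soon as
`r e = r f`. By (LPA2) every vertex of `T(r g)` emits at most one edge, so `T(r g)` is the forward
orbit of `r g` under the map `next` that follows the unique outgoing edge. If `r e = r f` with
`e ≠ f`, two different orbit points have the same image, so the orbit contains a periodic point,
i.e. a cycle in `T(r g)`. By (LPA4) the weighted edge `g` lies on that cycle, hence `r g` and with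
it all of `T(r g)` are periodic. But `next` is injective on periodic points, and
`next (s e) = r e = r f = next (s f)` then forces `s e = s f`, hence `e = f`.
-/

open Function

namespace WGraph

variable {G : WGraph}

noncomputable def next (G : WGraph) (v : G.V) : G.V :=
  if h : ∃ a, G.s a = v then G.r h.choose else v

def Unbranched (G : WGraph) (u : G.V) : Prop :=
  ∀ v, G.Geq u v → {a | G.s a = v}.Subsingleton

lemma next_s_eq {a : G.E} (h : {b | G.s b = G.s a}.Subsingleton) : G.next (G.s a) = G.r a := by
  have hex : ∃ b, G.s b = G.s a := ⟨a, rfl⟩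
  rw [next, dif_pos hex, h hex.choose_spec rfl]

lemma isFixedPt_next {v : G.V} (h : ∀ a, G.s a ≠ v) : IsFixedPt G.next v := by
  rw [IsFixedPt, next, dif_neg (not_exists.mpr h)]

lemma geq_next (v : G.V) : G.Geq v (G.next v) := by
  by_cases h : ∃ a, G.s a = v
  · rw [next, dif_pos h]
    exact Relation.ReflTransGen.single ⟨h.choose, h.choose_spec, rfl⟩
  · rw [next, dif_neg h]
    exact Relation.ReflTransGen.refl

lemma geq_iterate_next (v : G.V) (n : ℕ) : G.Geq v (G.next^[n] v) := by
  induction n with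
  | zero => exact Relation.ReflTransGen.refl
  | succ n ih => exact ih.trans (by rw [iterate_succ_apply']; exact geq_next _)

/-- A periodic orbit through a sink is that sink alone. -/
lemma exists_s_eq_iterate_next {z : G.V} (hz : z ∈ periodicPts G.next) (hzs : ∃ a, G.s a = z)
    (i : ℕ) : ∃ a, G.s a = G.next^[i] z := by
  by_contra! hsink
  have hfix : IsFixedPt G.next z :=
    isPeriodicPt_of_mem_periodicPts_of_isPeriodicPt_iterate hz
      ((isFixedPt_next hsink).isPeriodicPt 1)
  obtain ⟨a, ha⟩ := hzs
  exact hsink a (ha.trans (hfix.iterate i).eq.symm)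

lemma isCycleAt_of_mem_periodicPts {φ : G.V → G.V} {z : G.V} (hz : z ∈ periodicPts φ)
    (o : ℕ → G.E) (hs : ∀ i, G.s (o i) = φ^[i] z) (hr : ∀ i, G.r (o i) = φ^[i + 1] z) :
    G.IsCycleAt ((List.range (minimalPeriod φ z)).map o) z := by
  have hp := minimalPeriod_pos_of_mem_periodicPts hz
  refine ⟨by simpa using hp.ne', ?_, ?_, ?_, ?_⟩
  · rw [List.Chain', List.isChain_iff_getElem]
    intro i hi
    simp only [List.getElem_map, List.getElem_range, hr, hs]
  · simp [hs]
  · simp only [List.getLast_map, List.getLast_range, hr]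
    rw [Nat.sub_add_cancel hp, iterate_minimalPeriod]
  · rw [List.map_map, show G.s ∘ o = (φ^[·] z) from funext hs, ← Cycle.nodup_coe_iff]
    exact nodup_periodicOrbit

namespace Unbranched

variable {u : G.V} (hu : G.Unbranched u)
include hu

lemma exists_iterate_next_eq {v : G.V} (h : G.Geq u v) : ∃ n, G.next^[n] u = v := by
  induction h with
  | refl => exact ⟨0, rfl⟩
  | @tail b c hub hbc ih =>
    obtain ⟨n, hn⟩ := ih
    obtain ⟨a, rfl, rfl⟩ := hbc
    exact ⟨n + 1, by rw [iterate_succ_apply', hn, next_s_eq (hu _ hub)]⟩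

lemma mem_periodicPts {v : G.V} (hper : u ∈ periodicPts G.next) (h : G.Geq u v) :
    v ∈ periodicPts G.next := by
  obtain ⟨n, rfl⟩ := hu.exists_iterate_next_eq h
  obtain ⟨p, hp, hup⟩ := hper
  exact ⟨p, hp, hup.apply_iterate n⟩

lemma exists_mem_periodicPts {e f : G.E} (he : G.Geq u (G.s e)) (hf : G.Geq u (G.s f))
    (hef : e ≠ f) (hr : G.r e = G.r f) :
    ∃ z, G.Geq u z ∧ z ∈ periodicPts G.next ∧ ∃ a, G.s a = z := by
  obtain ⟨n, hn⟩ := hu.exists_iterate_next_eq he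
  obtain ⟨m, hm⟩ := hu.exists_iterate_next_eq hf
  wlog hnm : n ≤ m generalizing e f n m
  · exact this hf he hef.symm hr.symm m hm n hn (by omega)
  have hnm' : n < m := lt_of_le_of_ne hnm fun h =>
    hef (hu _ he rfl (show G.s f = G.s e by rw [← hn, ← hm, h]))
  have hsucc : G.next^[m + 1] u = G.next^[n + 1] u := by
    rw [iterate_succ_apply', iterate_succ_apply', hm, hn, next_s_eq (hu _ he),
      next_s_eq (hu _ hf), hr]
  have hper : IsPeriodicPt G.next (m - n) (G.s f) := by
    calc G.next^[m - n] (G.s f) = G.next^[m - n - 1] (G.next^[m + 1] u) := by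
          rw [← hm, ← iterate_add_apply, ← iterate_add_apply]; congr 1; omega
      _ = G.s f := by
          rw [hsucc, ← iterate_add_apply, ← hm]; congr 1; omega
  exact ⟨G.s f, hf, mk_mem_periodicPts (by omega) hper, f, rfl⟩

lemma eq_of_r_eq (hper : u ∈ periodicPts G.next) {e f : G.E} (he : G.Geq u (G.s e))
    (hf : G.Geq u (G.s f)) (hr : G.r e = G.r f) : e = f := by
  obtain ⟨p, hp, hpe⟩ := hu.mem_periodicPts hper he
  obtain ⟨q, hq, hqf⟩ := hu.mem_periodicPts hper hf
  refine hu _ he rfl (hpe.eq_of_apply_eq hqf hp hq ?_).symm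
  rw [next_s_eq (hu _ he), next_s_eq (hu _ hf), hr]

end Unbranched

namespace LPA

variable (h : G.LPA)
include h

lemma unbranched {g : G.E} (hg : G.Weighted g) : G.Unbranched (G.r g) :=
  fun v hv _ ha _ hb => h.2.1 v ⟨g, hg, hv⟩ _ _ ha hb

lemma exists_weighted_geq_s_of_r_eq {e f : G.E} (hr : G.r e = G.r f)
    (he : ∃ g, G.Weighted g ∧ G.Geq (G.r g) (G.s e))
    (hf : ∃ g, G.Weighted g ∧ G.Geq (G.r g) (G.s f)) :
    ∃ g, G.Weighted g ∧ G.Geq (G.r g) (G.s e) ∧ G.Geq (G.r g) (G.s f) := by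
  obtain ⟨ge, hgew, hgee⟩ := he
  obtain ⟨gf, hgfw, hgff⟩ := hf
  have step : ∀ a : G.E, G.Adj (G.s a) (G.r a) := fun a => ⟨a, rfl, rfl⟩
  by_cases hil : G.InLine ge gf
  · rcases hil with rfl | hl | hl
    · exact ⟨ge, hgew, hgee, hgff⟩
    · exact ⟨ge, hgew, hgee, (hl.tail (step gf)).trans hgff⟩
    · exact ⟨gf, hgfw, (hl.tail (step ge)).trans hgee, hgff⟩
  · exact (h.2.2.1 ge gf hgew hgfw hil (G.r e)
      ⟨hgee.tail (step e), hr ▸ hgff.tail (step f)⟩).elim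

/-- By (LPA4) a cycle below the weighted edge `g` passes through `g`, so `r g` lies on it. -/
lemma r_mem_periodicPts {g : G.E} (hg : G.Weighted g) {z : G.V} (hz : G.Geq (G.r g) z)
    (hzp : z ∈ periodicPts G.next) (hzs : ∃ a, G.s a = z) : G.r g ∈ periodicPts G.next := by
  choose o hs using exists_s_eq_iterate_next hzp hzs
  have hr : ∀ i, G.r (o i) = G.next^[i + 1] z := fun i => by
    have hgo : G.Geq (G.r g) (G.s (o i)) := hz.trans (hs i ▸ geq_iterate_next z i)
    rw [iterate_succ_apply', ← hs, next_s_eq (h.unbranched hg _ hgo)]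
  have hg_mem := h.2.2.2 g hg z hz _ (isCycleAt_of_mem_periodicPts hzp o hs hr)
  obtain ⟨i, -, rfl⟩ := List.mem_map.mp hg_mem
  obtain ⟨p, hp, hzp'⟩ := hzp
  exact ⟨p, hp, hr i ▸ hzp'.apply_iterate (i + 1)⟩

end LPA

end WGraph

theorem stmt0_general (G : WGraph) (h : G.LPA)
    (e f : G.E) (hef : e ≠ f)
    (he : ∃ g, G.Weighted g ∧ G.Geq (G.r g) (G.s e))
    (hf : ∃ g, G.Weighted g ∧ G.Geq (G.r g) (G.s f)) :
    G.r e ≠ G.r f := by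
  intro hr
  obtain ⟨g, hg, hge, hgf⟩ := h.exists_weighted_geq_s_of_r_eq hr he hf
  have hu := h.unbranched hg
  obtain ⟨z, hz, hzp, hzs⟩ := hu.exists_mem_periodicPts hge hgf hef hr
  exact hef (hu.eq_of_r_eq (h.r_mem_periodicPts hg hz hzp hzs) hge hgf hr)

/-- If `(E,w)` satisfies Condition (LPA) and `e ≠ f` are edges whose sources lie
in `T(r(E¹_w))`, then `r(e) ≠ r(f)`. -/
theorem stmt0 (K : Type) [Field K] (G : WGraph) (h : G.LPA)
    (e f : G.E) (hef : e ≠ f)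
    (he : ∃ g, G.Weighted g ∧ G.Geq (G.r g) (G.s e))
    (hf : ∃ g, G.Weighted g ∧ G.Geq (G.r g) (G.s f)) :
    G.r e ≠ G.r f :=
  stmt0_general G h e f hef he hf
end

section
/- Let (E,w) be a row-finite weighted graph that does not satisfy Condition (LPA), with any fixed choice of special edges. Then there exist a weighted edge e ∈ E¹_w and a nod-path whose first letter is e_2 and whose last letter is e_2*. -/
open FreeAlgebra
open scoped Classical

variable (G : WGraph) (K : Type) [Field K]

/-!
If (LPA) fails, we find a weighted edge `e` and a nod-path `W M W*` where `W` starts with `e₂`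
and `W*` is the mirror image of `W` (reversed, `a_i ↔ a_i*`), so that it ends with `e₂*`. Mirror
images of nod-paths are nod-paths, so only the junctions inside `W M` and the turn from `W M`
to `W*` need care. Below, `α₁` spells a walk `α` in letters of index `1`.
* (LPA1), (LPA2): `W = e₂ α₁` along a walk `e α` ending in a non-special edge, `M` empty.
* (LPA3): `W = e₂ α₁ β₁* f₂*` for walks `e α`, `f β` to a common vertex, `M` empty; the turn
  `f₂* f₂` is allowed, and so is the junction `α₁ β₁*` once `e α`, `f β` end in different edges.
* (LPA4): `W = e₂ α₁` for a walk `e α` to the cycle `c`, `M = c₁`; the turn is allowed once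
  `e α` and `c` end in different edges.
Different final edges are reached by cutting off common final edges (rotating `c` in (LPA4)); as
`e, f` are not in line, resp. `e ∉ c`, this stops before a walk is used up.
-/

namespace WGraph

variable {G : WGraph}

inductive IsWalk (G : WGraph) : G.V → G.V → List G.E → Prop
  | nil (v : G.V) : IsWalk G v v []
  | cons {e : G.E} {v : G.V} {l : List G.E} : IsWalk G (G.r e) v l → IsWalk G (G.s e) v (e :: l)

theorem Geq.exists_isWalk {u v : G.V} (h : G.Geq u v) : ∃ l, G.IsWalk u v l := by
  induction h using Relation.ReflTransGen.head_induction_on with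
  | refl => exact ⟨[], .nil v⟩
  | head hadj _ ih =>
    obtain ⟨e, rfl, rfl⟩ := hadj
    obtain ⟨l, hl⟩ := ih
    exact ⟨e :: l, hl.cons⟩

theorem isWalk_of_isChain {l : List G.E} (hl : l.IsChain fun a b => G.r a = G.s b) (hne : l ≠ [])
    {u v : G.V} (hu : G.s (l.head hne) = u) (hv : G.r (l.getLast hne) = v) : G.IsWalk u v l := by
  induction l generalizing u with
  | nil => exact absurd rfl hne
  | cons a l ih =>
    subst hu
    rcases l with _ | ⟨b, l⟩
    · subst hv; exact (IsWalk.nil _).cons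
    · obtain ⟨hab, hl⟩ := List.isChain_cons_cons.mp hl
      exact (ih hl (List.cons_ne_nil _ _) hab.symm hv).cons

theorem IsCycleAt.isWalk {c : List G.E} {v : G.V} (h : G.IsCycleAt c v) : G.IsWalk v v c :=
  let ⟨hne, hc, hs, hr, _⟩ := h
  isWalk_of_isChain hc hne hs hr

namespace IsWalk

variable {u v w : G.V} {l l₁ l₂ : List G.E}

theorem append (h₁ : G.IsWalk u v l₁) (h₂ : G.IsWalk v w l₂) : G.IsWalk u w (l₁ ++ l₂) := by
  induction h₁ with
  | nil => exact h₂
  | cons _ ih => exact (ih h₂).cons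

theorem nil_iff : G.IsWalk u v [] ↔ u = v :=
  ⟨by rintro ⟨⟩; rfl, by rintro rfl; exact .nil u⟩

theorem cons_iff {a : G.E} : G.IsWalk u v (a :: l) ↔ G.s a = u ∧ G.IsWalk (G.r a) v l :=
  ⟨by rintro ⟨⟩; exact ⟨rfl, ‹_›⟩, by rintro ⟨rfl, h⟩; exact h.cons⟩

theorem of_append_singleton {a : G.E} (h : G.IsWalk u v (l ++ [a])) :
    G.IsWalk u (G.s a) l ∧ G.r a = v := by
  induction l generalizing u with
  | nil => simp_all [cons_iff, nil_iff]
  | cons b l ih =>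
    rw [List.cons_append, cons_iff] at h
    exact (ih h.2).imp_left (cons_iff.mpr ⟨h.1, ·⟩)

theorem s_head? (h : G.IsWalk u v l) : ∀ a ∈ l.head?, G.s a = u := by
  cases h <;> simp

theorem isChain (h : G.IsWalk u v l) : l.IsChain fun a b => G.r a = G.s b := by
  induction h with
  | nil => exact .nil
  | cons h ih => exact List.isChain_cons.mpr ⟨fun b hb => (h.s_head? b hb).symm, ih⟩

theorem r_getLast (h : G.IsWalk u v l) (hne : l ≠ []) : G.r (l.getLast hne) = v := by
  obtain ⟨l, a, rfl⟩ := (List.eq_nil_or_concat l).resolve_left hne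
  rw [List.concat_eq_append] at h
  simpa using h.of_append_singleton.2

theorem geq_s_of_mem {a : G.E} (h : G.IsWalk u v l) (ha : a ∈ l) : G.Geq u (G.s a) := by
  induction h with
  | nil => simp at ha
  | @cons e _ _ _ ih =>
    rcases List.mem_cons.mp ha with rfl | ha
    · exact .refl
    · exact .head ⟨e, rfl, rfl⟩ (ih ha)

end IsWalk

theorem exists_isWalk_getLast_ne {e f : G.E} {u₁ u₂ : G.V} {α β : List G.E} {v : G.V}
    (hα : G.IsWalk u₁ v (e :: α)) (hβ : G.IsWalk u₂ v (f :: β))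
    (he : e ∉ f :: β) (hf : f ∉ e :: α) :
    ∃ α' β' w, G.IsWalk u₁ w (e :: α') ∧ G.IsWalk u₂ w (f :: β') ∧
      (e :: α').getLast (List.cons_ne_nil _ _) ≠ (f :: β').getLast (List.cons_ne_nil _ _) := by
  induction α using List.reverseRecOn generalizing β v with
  | nil =>
    exact ⟨[], β, v, hα, hβ,
      fun h => he (by simpa [← h] using List.getLast_mem (List.cons_ne_nil f β))⟩
  | append_singleton α a ih =>
    rcases β.eq_nil_or_concat with rfl | ⟨β, b, rfl⟩
    · exact ⟨_, [], v, hα, hβ, fun h => hf (by simp_all)⟩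
    rw [List.concat_eq_append] at *
    by_cases hab : a = b
    · subst hab
      rw [← List.cons_append] at hα hβ
      exact ih hα.of_append_singleton.1 hβ.of_append_singleton.1 (by simp_all) (by simp_all)
    · exact ⟨_, _, v, hα, hβ, by simpa⟩

theorem exists_isWalk_getLast_ne_cycle {e : G.E} {u : G.V} {α c : List G.E} {v : G.V}
    (hα : G.IsWalk u v (e :: α)) (hc : G.IsWalk v v c) (hne : c ≠ []) (he : e ∉ c) :
    ∃ α' c' w, G.IsWalk u w (e :: α') ∧ G.IsWalk w w c' ∧
      ∃ hne' : c' ≠ [], (e :: α').getLast (List.cons_ne_nil _ _) ≠ c'.getLast hne' := by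
  induction α using List.reverseRecOn generalizing c v with
  | nil => exact ⟨[], c, v, hα, hc, hne, fun h => he (by simpa [← h] using List.getLast_mem hne)⟩
  | append_singleton α a ih =>
    obtain ⟨c, b, rfl⟩ := (c.eq_nil_or_concat).resolve_left hne
    rw [List.concat_eq_append] at *
    by_cases hab : a = b
    · subst hab
      rw [← List.cons_append] at hα
      obtain ⟨hc, rfl⟩ := hc.of_append_singleton
      exact ih hα.of_append_singleton.1 hc.cons (List.cons_ne_nil _ _) (by simp_all)
    · exact ⟨_, _, v, hα, hc, hne, by simpa⟩

theorem InLine.symm {e f : G.E} (h : G.InLine e f) : G.InLine f e := by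
  rcases h with h | h | h
  exacts [.inl h.symm, .inr (.inr h), .inr (.inl h)]

theorem not_mem_cons_of_not_inLine {e f : G.E} (h : ¬ G.InLine e f) {β : List G.E} {v : G.V}
    (hβ : G.IsWalk (G.r f) v β) : e ∉ f :: β := by
  rw [List.mem_cons, not_or]
  exact ⟨fun h' => h (.inl h'), fun hm => h (.inr (.inr (hβ.geq_s_of_mem hm)))⟩

theorem special_ne_or_special_ne (sp : G.V → G.E) {x y : G.E} (hxy : x ≠ y) (hs : G.s x = G.s y) :
    sp (G.s x) ≠ x ∨ sp (G.s y) ≠ y := by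
  by_contra! h
  exact hxy (h.1.symm.trans (hs ▸ h.2))

end WGraph

namespace WGen

variable {G : WGraph}

def star : WGen G → WGen G
  | .vtx v => .vtx v
  | .edge e i h₁ h₂ => .ghost e i h₁ h₂
  | .ghost e i h₁ h₂ => .edge e i h₁ h₂

def edgeOne (a : G.E) : WGen G := .edge a 1 le_rfl (G.w_pos a)

def edgeTwo {e : G.E} (he : G.Weighted e) : WGen G := .edge e 2 one_le_two (Nat.succ_le_of_lt he)

end WGen

section Words

variable {G : WGraph} {sp : G.V → G.E}

def Links (sp : G.V → G.E) (a b : WGen G) : Prop := grng G a = gsrc G b ∧ ¬ Forbidden G sp a b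

variable {a b : G.E} {i j : ℕ} {hi₁ : 1 ≤ i} {hi₂ : i ≤ G.w a} {hj₁ : 1 ≤ j} {hj₂ : j ≤ G.w b}

@[simp] theorem links_edge_edge :
    Links sp (.edge a i hi₁ hi₂) (.edge b j hj₁ hj₂) ↔ G.r a = G.s b := by
  simp [Links, Forbidden, grng, gsrc]

@[simp] theorem links_ghost_ghost :
    Links sp (.ghost a i hi₁ hi₂) (.ghost b j hj₁ hj₂) ↔ G.s a = G.r b := by
  simp [Links, Forbidden, grng, gsrc]

@[simp] theorem links_edge_ghost :
    Links sp (.edge a i hi₁ hi₂) (.ghost b j hj₁ hj₂) ↔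
      G.r a = G.r b ∧ ¬(a = b ∧ sp (G.s a) = a) := by
  simp [Links, Forbidden, grng, gsrc]

@[simp] theorem links_ghost_edge :
    Links sp (.ghost a i hi₁ hi₂) (.edge b j hj₁ hj₂) ↔ G.s a = G.s b ∧ ¬(i = 1 ∧ j = 1) := by
  simp [Links, Forbidden, grng, gsrc]

theorem links_star {x y : WGen G} : Links sp y.star x.star ↔ Links sp x y := by
  cases x <;> cases y <;> simp only [Links, Forbidden, WGen.star, grng, gsrc] <;> grind

def NodWord (sp : G.V → G.E) (xs : List (WGen G)) : Prop :=
  (∀ x ∈ xs, ¬ IsVertexLetter G x) ∧ xs.IsChain (Links sp)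

theorem NodWord.isNod {xs : List (WGen G)} (h : NodWord sp xs) (hne : xs ≠ []) : IsNod G sp xs :=
  ⟨.inr ⟨hne, h.1, h.2.imp fun _ _ => And.left⟩, h.2.imp fun _ _ => And.right⟩

theorem nodWord_append {xs ys : List (WGen G)} :
    NodWord sp (xs ++ ys) ↔ NodWord sp xs ∧ NodWord sp ys ∧
      ∀ x ∈ xs.getLast?, ∀ y ∈ ys.head?, Links sp x y := by
  simp only [NodWord, List.mem_append, or_imp, forall_and, List.isChain_append]
  tauto

def starWord (xs : List (WGen G)) : List (WGen G) := (xs.map WGen.star).reverse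

@[simp] theorem head?_starWord (xs : List (WGen G)) :
    (starWord xs).head? = xs.getLast?.map WGen.star := by
  simp [starWord]

@[simp] theorem getLast?_starWord (xs : List (WGen G)) :
    (starWord xs).getLast? = xs.head?.map WGen.star := by
  simp [starWord]

theorem NodWord.starWord {xs : List (WGen G)} (h : NodWord sp xs) : NodWord sp (starWord xs) := by
  refine ⟨?_, ?_⟩
  · simp only [_root_.starWord, List.mem_reverse, List.mem_map, forall_exists_index, and_imp]
    rintro _ x hx rfl
    have := h.1 x hx
    cases x <;> simp_all [WGen.star, IsVertexLetter]
  · rw [_root_.starWord, List.isChain_reverse, List.isChain_map]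
    exact h.2.imp fun _ _ => links_star.mpr

end Words

section NodReturns

variable {G : WGraph} {sp : G.V → G.E} {e f : G.E}

def HasNodReturn (sp : G.V → G.E) {e : G.E} (he : G.Weighted e) : Prop :=
  ∃ p : List (WGen G), IsNod G sp p ∧
    p.head? = some (WGen.edgeTwo he) ∧ p.getLast? = some (WGen.edgeTwo he).star

theorem hasNodReturn_append_starWord (he : G.Weighted e) {W M : List (WGen G)}
    (hW : W.head? = some (WGen.edgeTwo he)) (hWM : NodWord sp (W ++ M))
    (hturn : ∀ x ∈ (W ++ M).getLast?, ∀ y ∈ W.getLast?, Links sp x y.star) :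
    HasNodReturn sp he := by
  have hWne : W ≠ [] := by rintro rfl; simp at hW
  refine ⟨W ++ M ++ starWord W, NodWord.isNod ?_ (by simp [hWne]), ?_, ?_⟩
  · refine nodWord_append.mpr ⟨hWM, (nodWord_append.mp hWM).1.starWord, fun x hx y hy => ?_⟩
    rw [head?_starWord, Option.mem_map] at hy
    obtain ⟨z, hz, rfl⟩ := hy
    exact hturn x hx z hz
  · simp [List.head?_append, hW]
  · simp [List.getLast?_append, hW]

def walkWord (he : G.Weighted e) (α : List G.E) : List (WGen G) :=
  WGen.edgeTwo he :: α.map WGen.edgeOne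

theorem nodWord_walkWord (he : G.Weighted e) {α : List G.E} {u v : G.V}
    (h : G.IsWalk u v (e :: α)) : NodWord sp (walkWord he α) := by
  refine ⟨by simp [walkWord, WGen.edgeTwo, WGen.edgeOne, IsVertexLetter], ?_⟩
  obtain ⟨hhead, htail⟩ := List.isChain_cons.mp h.isChain
  refine List.isChain_cons.mpr ⟨?_, (List.isChain_map _).mpr (htail.imp fun a b hab => ?_)⟩
  · simpa [WGen.edgeTwo, WGen.edgeOne] using hhead
  · simpa [WGen.edgeOne] using hab

theorem getLast?_walkWord (he : G.Weighted e) (α : List G.E) :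
    ∃ ℓ i h₁ h₂, ℓ = (e :: α).getLast (List.cons_ne_nil _ _) ∧
      (walkWord he α).getLast? = some (.edge ℓ i h₁ h₂) := by
  rcases α.eq_nil_or_concat with rfl | ⟨α, a, rfl⟩
  · exact ⟨e, 2, one_le_two, Nat.succ_le_of_lt he, rfl, rfl⟩
  · refine ⟨a, 1, le_rfl, G.w_pos a, by simp, ?_⟩
    rw [walkWord, List.concat_eq_append, List.map_append, List.map_singleton, ← List.cons_append,
      List.getLast?_concat]
    rfl

theorem hasNodReturn_of_getLast_not_special (he : G.Weighted e) {α : List G.E} {u v : G.V}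
    (h : G.IsWalk u v (e :: α))
    (hsp : sp (G.s ((e :: α).getLast (List.cons_ne_nil _ _))) ≠
      (e :: α).getLast (List.cons_ne_nil _ _)) :
    HasNodReturn sp he := by
  obtain ⟨_, i, h₁, h₂, rfl, hlast⟩ := getLast?_walkWord he α
  refine hasNodReturn_append_starWord he (W := walkWord he α) (M := []) rfl
    (by simpa using nodWord_walkWord he h) ?_
  simp [hlast, WGen.star, hsp]

theorem hasNodReturn_of_getLast_ne (he : G.Weighted e) (hf : G.Weighted f)
    {α β : List G.E} {u₁ u₂ w : G.V} (hα : G.IsWalk u₁ w (e :: α)) (hβ : G.IsWalk u₂ w (f :: β))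
    (hne : (e :: α).getLast (List.cons_ne_nil _ _) ≠ (f :: β).getLast (List.cons_ne_nil _ _)) :
    HasNodReturn sp he := by
  obtain ⟨_, i, h₁, h₂, rfl, hα_last⟩ := getLast?_walkWord he α
  obtain ⟨_, j, h₃, h₄, rfl, hβ_last⟩ := getLast?_walkWord hf β
  refine hasNodReturn_append_starWord he (W := walkWord he α ++ starWord (walkWord hf β)) (M := [])
    (by simp [walkWord]) ?_ ?_
  · rw [List.append_nil, nodWord_append]
    refine ⟨nodWord_walkWord he hα, (nodWord_walkWord hf hβ).starWord, ?_⟩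
    simp [hα_last, hβ_last, WGen.star, hα.r_getLast, hβ.r_getLast, hne]
  · have hlast : (walkWord he α ++ starWord (walkWord hf β)).getLast? =
        some (WGen.edgeTwo hf).star := by
      rw [List.getLast?_append_of_ne_nil _ (by simp [starWord, walkWord]), getLast?_starWord]
      rfl
    simp [hlast, WGen.edgeTwo, WGen.star]

theorem hasNodReturn_of_getLast_ne_cycle (he : G.Weighted e) {α c : List G.E} {u w : G.V}
    (hα : G.IsWalk u w (e :: α)) (hc : G.IsWalk w w c) (hc₀ : c ≠ [])
    (hne : (e :: α).getLast (List.cons_ne_nil _ _) ≠ c.getLast hc₀) :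
    HasNodReturn sp he := by
  obtain ⟨_, i, h₁, h₂, rfl, hα_last⟩ := getLast?_walkWord he α
  refine hasNodReturn_append_starWord he (W := walkWord he α) (M := c.map WGen.edgeOne) rfl ?_ ?_
  · have hαc : G.IsWalk u w (e :: (α ++ c)) := hα.append hc
    simpa [walkWord] using nodWord_walkWord (sp := sp) he hαc
  · rw [List.getLast?_append_of_ne_nil _ (by simpa), List.getLast?_map,
      List.getLast?_eq_some_getLast hc₀, hα_last]
    simp [WGen.edgeOne, WGen.star, hα.r_getLast, hc.r_getLast, Ne.symm hne]

end NodReturns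

theorem stmt5_general (G : WGraph) (sp : G.V → G.E) (h : ¬ G.LPA) :
    ∃ (e : G.E) (he : G.Weighted e) (p : List (WGen G)), IsNod G sp p ∧
      p.head? = some (WGen.edge e 2 one_le_two he) ∧
      p.getLast? = some (WGen.ghost e 2 one_le_two he) := by
  simp only [WGraph.LPA, not_and_or, not_forall, not_or, not_not, exists_prop] at h
  rcases h with ⟨a, b, ha, hb, hab, hne⟩ | ⟨v, ⟨g, hg, hgv⟩, x, y, rfl, hy, hxy⟩ |
    ⟨e, f, he, hf, hnl, v, hev, hfv⟩ | ⟨e, he, v, hev, c, hc, hec⟩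
  · obtain ⟨z, hz, hsp⟩ : ∃ z, G.Weighted z ∧ sp (G.s z) ≠ z :=
      (G.special_ne_or_special_ne sp hne hab).elim (⟨a, ha, ·⟩) (⟨b, hb, ·⟩)
    exact ⟨z, hz, hasNodReturn_of_getLast_not_special hz (.cons (.nil _)) hsp⟩
  · obtain ⟨z, hz, hsp⟩ : ∃ z, G.s z = G.s x ∧ sp (G.s z) ≠ z :=
      (G.special_ne_or_special_ne sp hxy hy.symm).elim (⟨x, rfl, ·⟩) (⟨y, hy, ·⟩)
    obtain ⟨α, hα⟩ := (hz ▸ hgv).exists_isWalk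
    have hwalk : G.IsWalk (G.s g) (G.r z) (g :: (α ++ [z])) := (hα.append (.cons (.nil _))).cons
    exact ⟨g, hg, hasNodReturn_of_getLast_not_special hg hwalk (by simpa using hsp)⟩
  · obtain ⟨α, hα⟩ := hev.exists_isWalk
    obtain ⟨β, hβ⟩ := hfv.exists_isWalk
    obtain ⟨α', β', w, hα', hβ', hne⟩ := WGraph.exists_isWalk_getLast_ne hα.cons hβ.cons
      (WGraph.not_mem_cons_of_not_inLine hnl hβ)
      (WGraph.not_mem_cons_of_not_inLine (mt WGraph.InLine.symm hnl) hα)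
    exact ⟨e, he, hasNodReturn_of_getLast_ne he hf hα' hβ' hne⟩
  · obtain ⟨α, hα⟩ := hev.exists_isWalk
    obtain ⟨α', c', w, hα', hc', hc₀, hne⟩ :=
      WGraph.exists_isWalk_getLast_ne_cycle hα.cons hc.isWalk hc.1 hec
    exact ⟨e, he, hasNodReturn_of_getLast_ne_cycle he hα' hc' hc₀ hne⟩

/-- If `(E,w)` does not satisfy Condition (LPA), there exist a weighted edge `e`
and a nod-path whose first letter is `e_2` and whose last letter is `e_2*`. -/
theorem stmt5 (G : WGraph) (sp : G.V → G.E) (hsp : IsSpecialChoice G sp) (h : ¬ G.LPA) :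
    ∃ (e : G.E) (he : G.Weighted e) (p : List (WGen G)), IsNod G sp p ∧
      p.head? = some (WGen.edge e 2 one_le_two he) ∧
      p.getLast? = some (WGen.ghost e 2 one_le_two he) :=
  stmt5_general G sp h
end

section
/- Let Λ be an infinite set and S a left Noetherian unital ring. Let M_Λ(S) denote the ring of Λ×Λ matrices over S having only finitely many nonzero entries. Let I₁ ⊆ I₂ ⊆ I₃ ⊆ … be an ascending chain of left ideals of M_Λ(S), and suppose there is a finite subset Λ^fin ⊆ Λ such that σ_{λμ} = 0 for every n ∈ ℕ, σ ∈ I_n, λ ∈ Λ and μ ∈ Λ \ Λ^fin. Then the chain I₁ ⊆ I₂ ⊆ … eventually stabilises: there exists N such that I_n = I_N for all n ≥ N. -/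
/-- Matrix multiplication on `M_Λ(S)`, the set of `Λ×Λ` matrices over `S` with finitely many
nonzero entries (encoded as finitely supported functions `Λ →₀ (Λ →₀ S)`):
`(M * N) λ μ = Σ_ν M λ ν * N ν μ`. -/
noncomputable def matMul {Λ S : Type} [Ring S] (M N : Λ →₀ (Λ →₀ S)) : Λ →₀ (Λ →₀ S) :=
  Finsupp.onFinset M.support (fun i => (M i).sum fun j a => a • N j) fun i hi => by
    rw [Finsupp.mem_support_iff]
    intro h0
    apply hi
    simp only [h0, Finsupp.sum_zero_index]

/-- Left multiplication by a matrix supported on a single row. -/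
lemma matMul_single {Λ S : Type} [Ring S] (lam : Λ) (r : Λ →₀ S) (σ : Λ →₀ (Λ →₀ S)) :
    matMul (Finsupp.single lam r) σ = Finsupp.single lam (r.sum fun j a => a • σ j) := by
  classical
  ext i mu
  show ((Finsupp.single lam r) i).sum (fun j a => a • σ j) mu = _
  rcases eq_or_ne lam i with h | h
  · subst h; simp
  · simp [Finsupp.single_apply, h]

/-- Extension by zero of a function on `Λfin` to a finitely supported function on `Λ`. -/
noncomputable def extMap (S : Type) [Ring S] {Λ : Type} (Λfin : Finset Λ) :
    (↥Λfin → S) →ₗ[S] (Λ →₀ S) :=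
  (Finsupp.lmapDomain S S Subtype.val).comp
    (Finsupp.linearEquivFunOnFinite S S ↥Λfin).symm.toLinearMap

/-- Extending the restriction of a function supported in `Λfin` recovers the function. -/
lemma extRes (S : Type) [Ring S] {Λ : Type} (Λfin : Finset Λ) (v : Λ →₀ S)
    (hv : ∀ mu ∉ Λfin, v mu = 0) :
    extMap S Λfin (fun i : ↥Λfin => v ↑i) = v := by
  classical
  ext mu
  show Finsupp.mapDomain Subtype.val
    ((Finsupp.linearEquivFunOnFinite S S ↥Λfin).symm fun i : ↥Λfin => v ↑i) mu = v mu
  by_cases hmu : mu ∈ Λfin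
  · have : mu = ((⟨mu, hmu⟩ : ↥Λfin) : Λ) := rfl
    rw [this, Finsupp.mapDomain_apply Subtype.val_injective]
    simp [Finsupp.linearEquivFunOnFinite]
  · rw [Finsupp.mapDomain_notin_range, hv mu hmu]
    rw [Subtype.range_coe]
    exact hmu

/-- Let `Λ` be an infinite set and `S` a left Noetherian unital ring. Any
ascending chain of left ideals of `M_Λ(S)` whose members have all their nonzero entries in
the columns indexed by a fixed finite subset `Λ^fin ⊆ Λ` eventually stabilises. -/
theorem stmt15 (Λ S : Type) [Infinite Λ] [Ring S] [IsNoetherianRing S]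
    (I : ℕ → AddSubgroup (Λ →₀ (Λ →₀ S)))
    (hleft : ∀ n, ∀ x σ : Λ →₀ (Λ →₀ S), σ ∈ I n → matMul x σ ∈ I n)
    (hchain : ∀ n, I n ≤ I (n + 1))
    (Λfin : Finset Λ)
    (hcol : ∀ n, ∀ σ ∈ I n, ∀ lam mu, mu ∉ Λfin → σ lam mu = 0) :
    ∃ N : ℕ, ∀ n, N ≤ n → I n = I N := by
  classical
  have hmono : Monotone I := monotone_nat_of_le_succ hchain
  -- the `S`-submodule of restricted rows of members of `I n`
  let J : ℕ → Submodule S (↥Λfin → S) := fun n =>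
    Submodule.span S { w | ∃ σ ∈ I n, ∃ lam, (fun i : ↥Λfin => σ lam ↑i) = w }
  have hJmono : Monotone J := by
    intro a b hab
    apply Submodule.span_mono
    rintro w ⟨σ, hσ, lam, rfl⟩
    exact ⟨σ, hmono hab hσ, lam, rfl⟩
  -- `↥Λfin → S` is a Noetherian `S`-module, so the chain `J` stabilises
  obtain ⟨N, hN⟩ := monotone_stabilizes_iff_noetherian.mpr inferInstance
    (⟨J, hJmono⟩ : ℕ →o Submodule S (↥Λfin → S))
  refine ⟨N, fun n hn => ?_⟩
  refine le_antisymm ?_ (hmono hn)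
  -- reconstruction: a matrix supported on one row lies in `I N` whenever that row,
  -- restricted to `Λfin`, lies in `J N`
  have key : ∀ (lam : Λ) (w : ↥Λfin → S), w ∈ J N →
      Finsupp.single lam (extMap S Λfin w) ∈ I N := by
    intro lam w hw
    induction hw using Submodule.span_induction with
    | mem w hwmem =>
        obtain ⟨σ, hσ, lam', rfl⟩ := hwmem
        rw [extRes S Λfin _ (fun mu hmu => hcol N σ hσ lam' mu hmu)]
        have h := hleft N (Finsupp.single lam (Finsupp.single lam' (1 : S))) σ hσ
        rwa [matMul_single, Finsupp.sum_single_index (by simp), one_smul] at h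
    | zero => simpa using (I N).zero_mem
    | add a b _ _ ha hb =>
        rw [map_add, Finsupp.single_add]
        exact (I N).add_mem ha hb
    | smul s a _ ha =>
        have h := hleft N (Finsupp.single lam (Finsupp.single lam s)) _ ha
        rw [matMul_single, Finsupp.sum_single_index (by simp),
          Finsupp.single_eq_same] at h
        rwa [map_smul]
  intro τ hτ
  rw [← Finsupp.sum_single τ]
  refine sum_mem fun lam _ => ?_
  have hvmem : (fun i : ↥Λfin => τ lam ↑i) ∈ J N := by
    have hJeq : J N = J n := hN n hn
    rw [hJeq]
    exact Submodule.subset_span ⟨τ, hτ, lam, rfl⟩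
  have h := key lam _ hvmem
  rwa [extRes S Λfin _ (fun mu hmu => hcol n τ hτ lam mu hmu)] at h
end
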